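/- arXiv:2201.03204 — 6 statements merged into one kernel-verified Lean document; each statement's English description precedes it below -/
import Mathlib

section
/- Let ψ: ℝ → ℝ be defined by ψ(x) = -log(1 - x + x²/2) for 0 ≤ x ≤ 1, ψ(x) = log 2 for x ≥ 1, and ψ(x) = -ψ(-x) for x ≤ 0. Then for all x ∈ ℝ, -log(1 - x + x²/2) ≤ ψ(x) ≤ log(1 + x + x²/2). -/
/-!
With `m x = 1 - x + x²/2` and `p x = 1 + x + x²/2` one has `m x * p x = 1 + x⁴/4 ≥ 1`, so
`-log m ≤ log p` everywhere; this settles `0 ≤ x ≤ 1`. For `x ≥ 1`, `m x ≥ 1/2` and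
`p x ≥ 2` put `log 2` between the two bounds. Since `m (-x) = p x`, the sandwich is preserved by
the odd extension, which covers `x ≤ 0`.
-/

open Real

lemma neg_log_le_log_of_one_le_mul {a b : ℝ} (ha : 0 < a) (h : 1 ≤ a * b) :
    -log a ≤ log b := by
  have hb : 0 < b := pos_of_mul_pos_right (one_pos.trans_le h) ha.le
  have := log_nonneg h
  rw [log_mul ha.ne' hb.ne'] at this
  linarith

lemma one_sub_add_sq_half_pos (x : ℝ) : 0 < 1 - x + x ^ 2 / 2 := by
  nlinarith [sq_nonneg (x - 1)]

lemma neg_log_one_sub_add_sq_half_le_log_one_add (x : ℝ) :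
    -log (1 - x + x ^ 2 / 2) ≤ log (1 + x + x ^ 2 / 2) :=
  neg_log_le_log_of_one_le_mul (one_sub_add_sq_half_pos x)
    (by nlinarith [pow_nonneg (sq_nonneg x) 2])

lemma neg_log_one_sub_add_sq_half_le_log_two {x : ℝ} (hx : 1 ≤ x) :
    -log (1 - x + x ^ 2 / 2) ≤ log 2 :=
  neg_log_le_log_of_one_le_mul (one_sub_add_sq_half_pos x) (by nlinarith)

lemma log_two_le_log_one_add_add_sq_half {x : ℝ} (hx : 1 ≤ x) :
    log 2 ≤ log (1 + x + x ^ 2 / 2) :=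
  log_le_log two_pos (by nlinarith)

lemma log_sandwich_of_neg {x v : ℝ}
    (h : -log (1 - -x + (-x) ^ 2 / 2) ≤ v ∧ v ≤ log (1 + -x + (-x) ^ 2 / 2)) :
    -log (1 - x + x ^ 2 / 2) ≤ -v ∧ -v ≤ log (1 + x + x ^ 2 / 2) := by
  have hm : 1 - -x + (-x) ^ 2 / 2 = 1 + x + x ^ 2 / 2 := by ring
  have hp : 1 + -x + (-x) ^ 2 / 2 = 1 - x + x ^ 2 / 2 := by ring
  rw [hm, hp] at h
  constructor <;> linarith [h.1, h.2]

/-- The truncation function ψ for the second-moment case satisfies the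
sandwich inequality (3) of the paper. -/
theorem stmt_0 (ψ : ℝ → ℝ)
    (h1 : ∀ x : ℝ, 0 ≤ x → x ≤ 1 → ψ x = -Real.log (1 - x + x ^ 2 / 2))
    (h2 : ∀ x : ℝ, 1 ≤ x → ψ x = Real.log 2)
    (h3 : ∀ x : ℝ, x ≤ 0 → ψ x = -ψ (-x)) :
    ∀ x : ℝ, -Real.log (1 - x + x ^ 2 / 2) ≤ ψ x ∧ ψ x ≤ Real.log (1 + x + x ^ 2 / 2) := by
  have of_nonneg : ∀ y : ℝ, 0 ≤ y →
      -log (1 - y + y ^ 2 / 2) ≤ ψ y ∧ ψ y ≤ log (1 + y + y ^ 2 / 2) := by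
    intro y hy
    rcases le_total y 1 with hy1 | hy1
    · rw [h1 y hy hy1]
      exact ⟨le_rfl, neg_log_one_sub_add_sq_half_le_log_one_add y⟩
    · rw [h2 y hy1]
      exact ⟨neg_log_one_sub_add_sq_half_le_log_two hy1,
        log_two_le_log_one_add_add_sq_half hy1⟩
  intro x
  rcases le_total 0 x with hx | hx
  · exact of_nonneg x hx
  · rw [h3 x hx]
    exact log_sandwich_of_neg (of_nonneg (-x) (neg_nonneg.mpr hx))
end

section
/- Let (x_i, y_i), i = 1,…,n, be i.i.d. samples from a distribution D on ℝ^d × ℝ, let ι > 0, let w ∈ ℝ^d be fixed, and let ψ satisfy ψ(t) ≤ log(1 + t + t²/2) for all t ≥ 0. Then E[exp(Σ_{i=1}^n ψ(ι|y_i - ⟨x_i, w⟩|))] ≤ exp(n(ι L(w) + (ι²/2) E(y - ⟨x, w⟩)²)), where L(w) = E|y - ⟨x, w⟩|. -/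
open MeasureTheory
open scoped RealInnerProductSpace

/-!
With `Z = Y - ⟪X, w⟫`: pointwise `exp (ψ t) ≤ 1 + t + t ^ 2 / 2` for `t ≥ 0`, so by independence
the expectation of `exp (∑ i, ψ (ι |Zᵢ|))` is at most `(E (1 + ι |Z| + ι ^ 2 / 2 Z ^ 2)) ^ n`,
i.e. `(1 + m) ^ n` with `m = ι E|Z| + ι ^ 2 / 2 E Z ^ 2`, and `1 + m ≤ exp m`.
-/

lemma Real.exp_le_one_add_add_sq_div_two {ψ : ℝ → ℝ}
    (hψ : ∀ t : ℝ, 0 ≤ t → ψ t ≤ Real.log (1 + t + t ^ 2 / 2)) {t : ℝ} (ht : 0 ≤ t) :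
    Real.exp (ψ t) ≤ 1 + t + t ^ 2 / 2 :=
  (Real.le_log_iff_exp_le (by positivity)).mp (hψ t ht)

lemma Real.one_add_pow_le_exp_mul {a : ℝ} (ha : 0 ≤ 1 + a) (n : ℕ) :
    (1 + a) ^ n ≤ Real.exp (n * a) := by
  rw [Real.exp_nat_mul]
  exact pow_le_pow_left₀ ha (by linarith [Real.add_one_le_exp a]) n

namespace MeasureTheory

variable {Ω : Type*} [MeasurableSpace Ω] {μ : Measure Ω}

lemma integral_exp_sum_le_pow [SigmaFinite μ] {κ : Type*} [Fintype κ] {φ g : Ω → ℝ}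
    (hg : Integrable g μ) (hφg : ∀ ω, Real.exp (φ ω) ≤ g ω) :
    ∫ x : κ → Ω, Real.exp (∑ i, φ (x i)) ∂Measure.pi (fun _ => μ) ≤
      (∫ ω, g ω ∂μ) ^ Fintype.card κ := by
  rw [← integral_fintype_prod_eq_pow]
  refine integral_mono_of_nonneg (ae_of_all _ fun x => (Real.exp_pos _).le)
    (Integrable.fintype_prod fun _ => hg) (ae_of_all _ fun x => ?_)
  simp only [Real.exp_sum]
  exact Finset.prod_le_prod (fun i _ => (Real.exp_pos _).le) fun i _ => hφg (x i)

lemma integral_one_add_mul_add_mul [IsProbabilityMeasure μ] {f g : Ω → ℝ}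
    (hf : Integrable f μ) (hg : Integrable g μ) (a b : ℝ) :
    ∫ ω, 1 + a * f ω + b * g ω ∂μ = 1 + (a * ∫ ω, f ω ∂μ + b * ∫ ω, g ω ∂μ) := by
  have hf' : Integrable (fun ω => 1 + a * f ω) μ := (integrable_const 1).add (hf.const_mul a)
  rw [integral_add hf' (hg.const_mul b), integral_add (integrable_const 1) (hf.const_mul a),
    integral_const, integral_const_mul,
    integral_const_mul, probReal_univ, one_smul, add_assoc]

end MeasureTheory

theorem stmt_10_general {d n : ℕ} {Ω : Type*} [MeasurableSpace Ω] (μ : Measure Ω)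
    [IsProbabilityMeasure μ] (X : Ω → EuclideanSpace ℝ (Fin d)) (Y : Ω → ℝ)
    (w : EuclideanSpace ℝ (Fin d)) (ι : ℝ) (hι : 0 < ι) (ψ : ℝ → ℝ)
    (hψ : ∀ t : ℝ, 0 ≤ t → ψ t ≤ Real.log (1 + t + t ^ 2 / 2))
    (hL : Integrable (fun ω => |Y ω - ⟪X ω, w⟫|) μ)
    (h2 : Integrable (fun ω => (Y ω - ⟪X ω, w⟫) ^ 2) μ) :
    (∫ ω : Fin n → Ω, Real.exp (∑ i, ψ (ι * |Y (ω i) - ⟪X (ω i), w⟫|))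
        ∂(Measure.pi fun _ => μ)) ≤
      Real.exp (n * (ι * (∫ ω, |Y ω - ⟪X ω, w⟫| ∂μ) +
        ι ^ 2 / 2 * ∫ ω, (Y ω - ⟪X ω, w⟫) ^ 2 ∂μ)) := by
  set Z : Ω → ℝ := fun ω => Y ω - ⟪X ω, w⟫
  have h_pointwise (ω : Ω) :
      Real.exp (ψ (ι * |Z ω|)) ≤ 1 + ι * |Z ω| + ι ^ 2 / 2 * Z ω ^ 2 := by
    have := Real.exp_le_one_add_add_sq_div_two hψ (by positivity : 0 ≤ ι * |Z ω|)
    rwa [mul_pow, sq_abs, mul_div_right_comm] at this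
  have h_int : Integrable (fun ω => 1 + ι * |Z ω| + ι ^ 2 / 2 * Z ω ^ 2) μ :=
    ((integrable_const 1).add (hL.const_mul ι)).add (h2.const_mul _)
  calc _ ≤ (∫ ω, 1 + ι * |Z ω| + ι ^ 2 / 2 * Z ω ^ 2 ∂μ) ^ n := by
        simpa using integral_exp_sum_le_pow (κ := Fin n) h_int h_pointwise
    _ = (1 + (ι * ∫ ω, |Z ω| ∂μ + ι ^ 2 / 2 * ∫ ω, Z ω ^ 2 ∂μ)) ^ n := by
        rw [integral_one_add_mul_add_mul hL h2]
    _ ≤ _ := Real.one_add_pow_le_exp_mul (by positivity) n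

/-- MGF upper bound for the truncated empirical risk (second-moment case). -/
theorem stmt_10 {d n : ℕ} {Ω : Type*} [MeasurableSpace Ω] (μ : Measure Ω)
    [IsProbabilityMeasure μ] (X : Ω → EuclideanSpace ℝ (Fin d)) (Y : Ω → ℝ)
    (hXm : Measurable X) (hYm : Measurable Y)
    (w : EuclideanSpace ℝ (Fin d)) (ι : ℝ) (hι : 0 < ι) (ψ : ℝ → ℝ)
    (hψ : ∀ t : ℝ, 0 ≤ t → ψ t ≤ Real.log (1 + t + t ^ 2 / 2))
    (hL : Integrable (fun ω => |Y ω - ⟪X ω, w⟫|) μ)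
    (h2 : Integrable (fun ω => (Y ω - ⟪X ω, w⟫) ^ 2) μ) :
    (∫ ω : Fin n → Ω, Real.exp (∑ i, ψ (ι * |Y (ω i) - ⟪X (ω i), w⟫|))
        ∂(Measure.pi fun _ => μ)) ≤
      Real.exp (n * (ι * (∫ ω, |Y ω - ⟪X ω, w⟫| ∂μ) +
        ι ^ 2 / 2 * ∫ ω, (Y ω - ⟪X ω, w⟫) ^ 2 ∂μ)) :=
  stmt_10_general μ X Y w ι hι ψ hψ hL h2
end

section
/- Let (x_i, y_i), i = 1,…,n, be i.i.d. samples from D, let ι > 0, w fixed, and let ψ satisfy ψ(t) ≤ log(1 + t + t²/2) for t ≥ 0. Then for any η ∈ (0,1), with probability at least 1 - η, (1/(nι)) Σ_{i=1}^n ψ(ι|y_i - ⟨x_i, w⟩|) ≤ L(w) + (ι/2) E(y - ⟨x, w⟩)² + (1/(nι)) log(1/η). -/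
/-!
Chernoff's method, with `r = y - ⟪x, w⟫`. Since `ψ t ≤ log (1 + t + t² / 2)`, the exponential
of `∑ ψ (ι |rᵢ|)` is at most `∏ (1 + ι |rᵢ| + ι² rᵢ² / 2)`, whose expectation under the product
measure is `(1 + s)ⁿ ≤ exp (n s)` with `s = ι L(w) + ι² E r² / 2`. Markov's inequality for this
product shows that the sum exceeds `n s + log (1 / η)` with probability at most `η`.
-/

open MeasureTheory
open scoped RealInnerProductSpace

lemma ofReal_one_sub_le_measure {Ω : Type*} [MeasurableSpace Ω] (μ : Measure Ω)
    [IsProbabilityMeasure μ] {s : Set Ω} {η : ℝ} (hη : 0 ≤ η) (h : μ sᶜ ≤ ENNReal.ofReal η) :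
    ENNReal.ofReal (1 - η) ≤ μ s := by
  rw [ENNReal.ofReal_sub 1 hη, ENNReal.ofReal_one, tsub_le_iff_right]
  calc 1 = μ Set.univ := measure_univ.symm
    _ ≤ μ s + μ sᶜ := measure_univ_le_add_compl s
    _ ≤ μ s + ENNReal.ofReal η := by gcongr

lemma measure_pi_lt_sum_le_of_le_log {κ Ω : Type*} [Fintype κ] [MeasurableSpace Ω]
    (μ : Measure Ω) [IsFiniteMeasure μ] {f g : Ω → ℝ} (hg : Integrable g μ)
    (hg_pos : ∀ ω, 0 < g ω) (hfg : ∀ ω, f ω ≤ Real.log (g ω)) (a : ℝ) :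
    Measure.pi (fun _ : κ => μ) {x | a < ∑ i, f (x i)} ≤
      ENNReal.ofReal ((∫ ω, g ω ∂μ) ^ Fintype.card κ / Real.exp a) := by
  set ν := Measure.pi fun _ : κ => μ
  have hsub : {x : κ → Ω | a < ∑ i, f (x i)} ⊆ {x | Real.exp a ≤ ∏ i, g (x i)} := by
    intro x hx
    have hprod : 0 < ∏ i, g (x i) := Finset.prod_pos fun i _ => hg_pos (x i)
    refine ((Real.lt_log_iff_exp_lt hprod).mp ?_).le
    rw [Real.log_prod fun i _ => (hg_pos (x i)).ne']
    exact lt_of_lt_of_le hx (Finset.sum_le_sum fun i _ => hfg (x i))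
  have hmarkov : Real.exp a * ν.real {x : κ → Ω | Real.exp a ≤ ∏ i, g (x i)} ≤
      (∫ ω, g ω ∂μ) ^ Fintype.card κ := by
    rw [← integral_fintype_prod_eq_pow]
    exact mul_meas_ge_le_integral_of_nonneg
      (ae_of_all _ fun x => Finset.prod_nonneg fun i _ => (hg_pos (x i)).le)
      (Integrable.fintype_prod fun _ => hg) _
  calc ν {x | a < ∑ i, f (x i)} ≤ ν {x | Real.exp a ≤ ∏ i, g (x i)} := measure_mono hsub
    _ = ENNReal.ofReal (ν.real {x | Real.exp a ≤ ∏ i, g (x i)}) := (ofReal_measureReal).symm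
    _ ≤ _ := by
      gcongr
      rw [le_div_iff₀ (Real.exp_pos a), mul_comm]
      exact hmarkov

section TruncatedLoss

variable {Ω : Type*} [MeasurableSpace Ω] {μ : Measure Ω} [IsProbabilityMeasure μ]
  {r : Ω → ℝ}

lemma integrable_one_add_mul_abs_add_mul_sq (h1 : Integrable (fun ω => |r ω|) μ)
    (h2 : Integrable (fun ω => r ω ^ 2) μ) (ι : ℝ) :
    Integrable (fun ω => 1 + ι * |r ω| + ι ^ 2 / 2 * r ω ^ 2) μ :=
  ((integrable_const 1).add (h1.const_mul ι)).add (h2.const_mul _)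

lemma integral_one_add_mul_abs_add_mul_sq (h1 : Integrable (fun ω => |r ω|) μ)
    (h2 : Integrable (fun ω => r ω ^ 2) μ) (ι : ℝ) :
    ∫ ω, (1 + ι * |r ω| + ι ^ 2 / 2 * r ω ^ 2) ∂μ =
      1 + (ι * ∫ ω, |r ω| ∂μ + ι ^ 2 / 2 * ∫ ω, r ω ^ 2 ∂μ) := by
  have h1' : Integrable (fun ω => 1 + ι * |r ω|) μ := (integrable_const 1).add (h1.const_mul ι)
  rw [integral_add h1' (h2.const_mul _), integral_add (integrable_const 1) (h1.const_mul ι),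
    integral_const_mul, integral_const_mul]
  simp only [integral_const, probReal_univ, smul_eq_mul, mul_one]
  ring

lemma measure_pi_lt_sum_psi_mul_abs_le (h1 : Integrable (fun ω => |r ω|) μ)
    (h2 : Integrable (fun ω => r ω ^ 2) μ) {ι : ℝ} (hι : 0 ≤ ι) {ψ : ℝ → ℝ}
    (hψ : ∀ t : ℝ, 0 ≤ t → ψ t ≤ Real.log (1 + t + t ^ 2 / 2)) (n : ℕ) {η : ℝ} (hη : 0 < η) :
    Measure.pi (fun _ : Fin n => μ)
      {x | n * (ι * ∫ ω, |r ω| ∂μ + ι ^ 2 / 2 * ∫ ω, r ω ^ 2 ∂μ) + Real.log (1 / η) <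
        ∑ i, ψ (ι * |r (x i)|)} ≤ ENNReal.ofReal η := by
  set s := ι * ∫ ω, |r ω| ∂μ + ι ^ 2 / 2 * ∫ ω, r ω ^ 2 ∂μ
  have hs : 0 ≤ s := by
    have : 0 ≤ ∫ ω, |r ω| ∂μ := integral_nonneg fun ω => abs_nonneg _
    have : 0 ≤ ∫ ω, r ω ^ 2 ∂μ := integral_nonneg fun ω => sq_nonneg _
    positivity
  have hψg : ∀ ω, ψ (ι * |r ω|) ≤ Real.log (1 + ι * |r ω| + ι ^ 2 / 2 * r ω ^ 2) := by
    intro ω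
    convert hψ (ι * |r ω|) (by positivity) using 3
    rw [mul_pow, sq_abs]
    ring
  refine (measure_pi_lt_sum_le_of_le_log μ (integrable_one_add_mul_abs_add_mul_sq h1 h2 ι)
    (fun ω => by positivity) hψg _).trans (ENNReal.ofReal_le_ofReal ?_)
  rw [integral_one_add_mul_abs_add_mul_sq h1 h2, Fintype.card_fin, Real.exp_add,
    Real.exp_log (by positivity), div_le_iff₀ (by positivity)]
  calc (1 + s) ^ n ≤ Real.exp s ^ n := by gcongr; linarith [Real.add_one_le_exp s]
    _ = η * (Real.exp (n * s) * (1 / η)) := by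
      rw [Real.exp_nat_mul]
      field_simp

end TruncatedLoss

theorem stmt_13_general {d : ℕ} (n : ℕ) (hn : 0 < n) {Ω : Type*} [MeasurableSpace Ω]
    (μ : Measure Ω) [IsProbabilityMeasure μ]
    (X : Ω → EuclideanSpace ℝ (Fin d)) (Y : Ω → ℝ)
    (w : EuclideanSpace ℝ (Fin d)) (ι : ℝ) (hι : 0 < ι) (ψ : ℝ → ℝ)
    (hψ : ∀ t : ℝ, 0 ≤ t → ψ t ≤ Real.log (1 + t + t ^ 2 / 2))
    (hL : Integrable (fun ω => |Y ω - ⟪X ω, w⟫|) μ)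
    (h2 : Integrable (fun ω => (Y ω - ⟪X ω, w⟫) ^ 2) μ)
    (η : ℝ) (hη0 : 0 < η) :
    ENNReal.ofReal (1 - η) ≤
      (Measure.pi fun _ : Fin n => μ)
        {ω | (1 / (n * ι)) * ∑ i, ψ (ι * |Y (ω i) - ⟪X (ω i), w⟫|) ≤
          (∫ ω', |Y ω' - ⟪X ω', w⟫| ∂μ) +
          ι / 2 * (∫ ω', (Y ω' - ⟪X ω', w⟫) ^ 2 ∂μ) +
          (1 / (n * ι)) * Real.log (1 / η)} := by
  refine ofReal_one_sub_le_measure _ hη0.le ((measure_mono ?_).trans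
    (measure_pi_lt_sum_psi_mul_abs_le hL h2 hι.le hψ n hη0))
  intro x hx
  have hnι : (0 : ℝ) < n * ι := mul_pos (Nat.cast_pos.mpr hn) hι
  simp only [Set.mem_compl_iff, Set.mem_ofPred_eq, not_le] at hx ⊢
  rw [← mul_lt_mul_iff_of_pos_left hnι] at hx
  rw [mul_add, ← mul_assoc, ← mul_assoc, mul_one_div_cancel hnι.ne', one_mul, one_mul] at hx
  linarith

/-- One-sided concentration (upper) for the truncated empirical risk. -/
theorem stmt_13 {d : ℕ} (n : ℕ) (hn : 0 < n) {Ω : Type*} [MeasurableSpace Ω]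
    (μ : Measure Ω) [IsProbabilityMeasure μ]
    (X : Ω → EuclideanSpace ℝ (Fin d)) (Y : Ω → ℝ)
    (hXm : Measurable X) (hYm : Measurable Y)
    (w : EuclideanSpace ℝ (Fin d)) (ι : ℝ) (hι : 0 < ι) (ψ : ℝ → ℝ)
    (hψ : ∀ t : ℝ, 0 ≤ t → ψ t ≤ Real.log (1 + t + t ^ 2 / 2))
    (hL : Integrable (fun ω => |Y ω - ⟪X ω, w⟫|) μ)
    (h2 : Integrable (fun ω => (Y ω - ⟪X ω, w⟫) ^ 2) μ)
    (η : ℝ) (hη0 : 0 < η) (hη1 : η < 1) :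
    ENNReal.ofReal (1 - η) ≤
      (Measure.pi fun _ : Fin n => μ)
        {ω | (1 / (n * ι)) * ∑ i, ψ (ι * |Y (ω i) - ⟪X (ω i), w⟫|) ≤
          (∫ ω', |Y ω' - ⟪X ω', w⟫| ∂μ) +
          ι / 2 * (∫ ω', (Y ω' - ⟪X ω', w⟫) ^ 2 ∂μ) +
          (1 / (n * ι)) * Real.log (1 / η)} :=
  stmt_13_general n hn μ X Y w ι hι ψ hψ hL h2 η hη0
end

section
/- Let (x_i, y_i), i = 1,…,n, be i.i.d. samples from D, let ι > 0, w fixed, and let ψ satisfy ψ(t) ≥ -log(1 - t + t²/2) for t ≥ 0. Then for any η ∈ (0,1), with probability at least 1 - η, (1/(nι)) Σ_{i=1}^n ψ(ι|y_i - ⟨x_i, w⟩|) ≥ L(w) - (ι/2) E(y - ⟨x, w⟩)² - (1/(nι)) log(1/η). -/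
open MeasureTheory Real
open scoped RealInnerProductSpace

/-!
Chernoff's method for the lower tail. With `Z = ι |y - ⟨x, w⟩| ≥ 0` and
`V = -log (1 - Z + Z² / 2) ≤ ψ Z`, the variable `exp (-V) = 1 - Z + Z² / 2` has mean
`1 - ι L(w) + ι² E(y - ⟨x, w⟩)² / 2 ≤ exp (-ι L(w) + ι² E(y - ⟨x, w⟩)² / 2)`.
For i.i.d. samples `E exp (-∑ Vᵢ)` is the `n`-th power of this mean, so Markov's inequality
applied to `exp (-∑ Vᵢ)` shows that `∑ Vᵢ` falls below
`n ι (L(w) - ι E(y - ⟨x, w⟩)² / 2) - log (1 / η)` with probability at most `η`.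
-/

section Chernoff

variable {Ω : Type*} [MeasurableSpace Ω] {μ : Measure Ω}

theorem measure_pi_sum_le_le [IsFiniteMeasure μ] (n : ℕ) {V : Ω → ℝ}
    (hV : Integrable (fun x => exp (-V x)) μ) (a : ℝ) :
    Measure.pi (fun _ : Fin n => μ) {ω | ∑ i, V (ω i) ≤ a} ≤
      ENNReal.ofReal (exp a * (∫ x, exp (-V x) ∂μ) ^ n) := by
  have hprod (ω : Fin n → Ω) : ∏ i, exp (-V (ω i)) = exp (-∑ i, V (ω i)) := by
    rw [← Finset.sum_neg_distrib, exp_sum]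
  have hsub :
      {ω : Fin n → Ω | ∑ i, V (ω i) ≤ a} ⊆ {ω | exp (-a) ≤ ∏ i, exp (-V (ω i))} :=
    fun ω hω => by simpa [hprod] using hω
  have hmarkov := mul_meas_ge_le_integral_of_nonneg
    (Filter.Eventually.of_forall fun ω => (Finset.prod_pos fun i _ => exp_pos (-V (ω i))).le)
    (Integrable.fintype_prod (f := fun _ : Fin n => fun x => exp (-V x)) fun _ => hV) (exp (-a))
  rw [integral_fintype_prod_eq_pow (fun x => exp (-V x)), Fintype.card_fin, measureReal_def,
    ← le_div_iff₀' (exp_pos _), div_eq_mul_inv, ← exp_neg, neg_neg, mul_comm] at hmarkov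
  exact (measure_mono hsub).trans
    ((ENNReal.le_ofReal_iff_toReal_le (measure_ne_top _ _) (by positivity)).2 hmarkov)

variable [IsProbabilityMeasure μ]

theorem ofReal_one_sub_le_measure_pi_lt_sum (n : ℕ) {V : Ω → ℝ}
    (hV : Integrable (fun x => exp (-V x)) μ) {a η : ℝ}
    (hη : exp a * (∫ x, exp (-V x) ∂μ) ^ n ≤ η) :
    ENNReal.ofReal (1 - η) ≤ Measure.pi (fun _ : Fin n => μ) {ω | a < ∑ i, V (ω i)} := by
  set s := {ω : Fin n → Ω | ∑ i, V (ω i) ≤ a}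
  have hcompl : {ω : Fin n → Ω | a < ∑ i, V (ω i)} = sᶜ := by ext; simp [s]
  have hbound : 0 ≤ exp a * (∫ x, exp (-V x) ∂μ) ^ n :=
    mul_nonneg (exp_pos a).le (pow_nonneg (integral_nonneg fun x => (exp_pos _).le) n)
  calc ENNReal.ofReal (1 - η)
      ≤ ENNReal.ofReal (1 - exp a * (∫ x, exp (-V x) ∂μ) ^ n) :=
        ENNReal.ofReal_le_ofReal (by linarith)
    _ = 1 - ENNReal.ofReal (exp a * (∫ x, exp (-V x) ∂μ) ^ n) := by
        rw [ENNReal.ofReal_sub _ hbound, ENNReal.ofReal_one]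
    _ ≤ 1 - Measure.pi (fun _ : Fin n => μ) s :=
        tsub_le_tsub_left (measure_pi_sum_le_le n hV a) 1
    _ ≤ Measure.pi (fun _ : Fin n => μ) sᶜ := by
        rw [tsub_le_iff_left, ← measure_univ (μ := Measure.pi fun _ : Fin n => μ)]
        exact measure_univ_le_add_compl s
    _ = _ := by rw [hcompl]

theorem one_sub_add_sq_div_two_pos (t : ℝ) : 0 < 1 - t + t ^ 2 / 2 := by
  nlinarith [sq_nonneg (t - 1)]

theorem integral_one_sub_add_sq_div_two_le_exp {Z : Ω → ℝ} (hZ : Integrable Z μ)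
    (hZ2 : Integrable (fun x => Z x ^ 2) μ) :
    ∫ x, (1 - Z x + Z x ^ 2 / 2) ∂μ ≤ exp (-∫ x, Z x ∂μ + (∫ x, Z x ^ 2 ∂μ) / 2) := by
  have hlin : Integrable (fun x => 1 - Z x) μ := (integrable_const 1).sub hZ
  rw [integral_add hlin (hZ2.div_const 2), integral_sub (integrable_const 1) hZ, integral_div,
    integral_const, probReal_univ, one_smul]
  linarith [add_one_le_exp (-∫ x, Z x ∂μ + (∫ x, Z x ^ 2 ∂μ) / 2)]

theorem ofReal_one_sub_le_measure_pi_le_sum_of_neg_log_le (n : ℕ) {Z : Ω → ℝ}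
    (hZ0 : ∀ x, 0 ≤ Z x) (hZ : Integrable Z μ) (hZ2 : Integrable (fun x => Z x ^ 2) μ)
    {ψ : ℝ → ℝ} (hψ : ∀ t : ℝ, 0 ≤ t → -log (1 - t + t ^ 2 / 2) ≤ ψ t) {η : ℝ} (hη : 0 < η) :
    ENNReal.ofReal (1 - η) ≤ Measure.pi (fun _ : Fin n => μ)
      {ω | n * (∫ x, Z x ∂μ - (∫ x, Z x ^ 2 ∂μ) / 2) + log η ≤ ∑ i, ψ (Z (ω i))} := by
  set V : Ω → ℝ := fun x => -log (1 - Z x + Z x ^ 2 / 2)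
  set c := -∫ x, Z x ∂μ + (∫ x, Z x ^ 2 ∂μ) / 2
  have hexpV : (fun x => exp (-V x)) = fun x => 1 - Z x + Z x ^ 2 / 2 := by
    ext x; simp only [V, neg_neg, exp_log (one_sub_add_sq_div_two_pos _)]
  have hV : Integrable (fun x => exp (-V x)) μ :=
    hexpV ▸ ((integrable_const 1).sub hZ).add (hZ2.div_const 2)
  have hη' : exp (-n * c + log η) * (∫ x, exp (-V x) ∂μ) ^ n ≤ η := calc
    _ ≤ exp (-n * c + log η) * exp c ^ n := by
        gcongr
        exact hexpV ▸ integral_one_sub_add_sq_div_two_le_exp hZ hZ2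
    _ = η := by
        rw [← exp_nat_mul, ← exp_add, neg_mul, add_right_comm, neg_add_cancel, zero_add,
          exp_log hη]
  refine (ofReal_one_sub_le_measure_pi_lt_sum n hV hη').trans (measure_mono fun ω hω => ?_)
  calc _ = -n * c + log η := by ring
    _ ≤ ∑ i, V (ω i) := le_of_lt hω
    _ ≤ ∑ i, ψ (Z (ω i)) := Finset.sum_le_sum fun i _ => hψ _ (hZ0 _)

end Chernoff

theorem stmt_14_general {d : ℕ} (n : ℕ) (hn : 0 < n) {Ω : Type*} [MeasurableSpace Ω]
    (μ : Measure Ω) [IsProbabilityMeasure μ]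
    (X : Ω → EuclideanSpace ℝ (Fin d)) (Y : Ω → ℝ)
    (w : EuclideanSpace ℝ (Fin d)) (ι : ℝ) (hι : 0 < ι) (ψ : ℝ → ℝ)
    (hψ : ∀ t : ℝ, 0 ≤ t → -Real.log (1 - t + t ^ 2 / 2) ≤ ψ t)
    (hL : Integrable (fun ω => |Y ω - ⟪X ω, w⟫|) μ)
    (h2 : Integrable (fun ω => (Y ω - ⟪X ω, w⟫) ^ 2) μ)
    (η : ℝ) (hη0 : 0 < η) :
    ENNReal.ofReal (1 - η) ≤
      (Measure.pi fun _ : Fin n => μ)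
        {ω | (∫ ω', |Y ω' - ⟪X ω', w⟫| ∂μ) -
          ι / 2 * (∫ ω', (Y ω' - ⟪X ω', w⟫) ^ 2 ∂μ) -
          (1 / (n * ι)) * Real.log (1 / η) ≤
          (1 / (n * ι)) * ∑ i, ψ (ι * |Y (ω i) - ⟪X (ω i), w⟫|)} := by
  have hsq :
      (fun ω => (ι * |Y ω - ⟪X ω, w⟫|) ^ 2) = fun ω => ι ^ 2 * (Y ω - ⟪X ω, w⟫) ^ 2 := by
    ext ω; rw [mul_pow, sq_abs]
  have hZ2 : Integrable (fun ω => (ι * |Y ω - ⟪X ω, w⟫|) ^ 2) μ := hsq ▸ h2.const_mul _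
  have hbound := ofReal_one_sub_le_measure_pi_le_sum_of_neg_log_le n
    (fun ω => by positivity) (hL.const_mul ι) hZ2 hψ hη0
  rw [hsq, integral_const_mul, integral_const_mul] at hbound
  refine hbound.trans (measure_mono fun ω hω => ?_)
  have hnι : 0 < (n : ℝ) * ι := by positivity
  refine le_trans (le_of_eq ?_) (mul_le_mul_of_nonneg_left hω (one_div_nonneg.2 hnι.le))
  simp only [one_div, log_inv]
  field_simp
  ring

/-- One-sided concentration (lower) for the truncated empirical risk. -/
theorem stmt_14 {d : ℕ} (n : ℕ) (hn : 0 < n) {Ω : Type*} [MeasurableSpace Ω]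
    (μ : Measure Ω) [IsProbabilityMeasure μ]
    (X : Ω → EuclideanSpace ℝ (Fin d)) (Y : Ω → ℝ)
    (hXm : Measurable X) (hYm : Measurable Y)
    (w : EuclideanSpace ℝ (Fin d)) (ι : ℝ) (hι : 0 < ι) (ψ : ℝ → ℝ)
    (hψ : ∀ t : ℝ, 0 ≤ t → -Real.log (1 - t + t ^ 2 / 2) ≤ ψ t)
    (hL : Integrable (fun ω => |Y ω - ⟪X ω, w⟫|) μ)
    (h2 : Integrable (fun ω => (Y ω - ⟪X ω, w⟫) ^ 2) μ)
    (η : ℝ) (hη0 : 0 < η) (hη1 : η < 1) :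
    ENNReal.ofReal (1 - η) ≤
      (Measure.pi fun _ : Fin n => μ)
        {ω | (∫ ω', |Y ω' - ⟪X ω', w⟫| ∂μ) -
          ι / 2 * (∫ ω', (Y ω' - ⟪X ω', w⟫) ^ 2 ∂μ) -
          (1 / (n * ι)) * Real.log (1 / η) ≤
          (1 / (n * ι)) * ∑ i, ψ (ι * |Y (ω i) - ⟪X (ω i), w⟫|)} :=
  stmt_14_general n hn μ X Y w ι hι ψ hψ hL h2 η hη0
end

section
/- Let R be a finite set, u: Datasets × R → ℝ a score function with sensitivity Δu = max_{r∈R} max_{D∼D'} |u(D,r) - u(D',r)|, and let M be the exponential mechanism that outputs r ∈ R with probability proportional to exp(ε u(D,r)/(2Δu)). Then for every t > 0, Pr[u(D, M(D)) ≤ max_{r∈R} u(D,r) - (2Δu/ε)(log|R| + t)] ≤ e^{-t}. -/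
/-!
Every output whose score lies at least `c` below the optimum carries weight at most `exp (k * (max u - c))`,
while the normalising constant is at least the weight `exp (k * max u)` of an optimal output.
So the bad outputs have total mass at most `|R| * exp (-k c)`, which is `exp (-t)` for
`k = ε / (2Δu)` and `c = (2Δu/ε)(log |R| + t)`.
-/

section

open Finset Real

variable {ι : Type*}

lemma sum_exp_filter_le_card_mul_exp {k : ℝ} (hk : 0 ≤ k) (s : Finset ι) (f : ι → ℝ) (c : ℝ) :
    ∑ i ∈ s.filter (fun i => f i ≤ c), exp (k * f i) ≤ #s * exp (k * c) :=
  calc ∑ i ∈ s.filter (fun i => f i ≤ c), exp (k * f i)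
      ≤ ∑ _i ∈ s.filter (fun i => f i ≤ c), exp (k * c) :=
        sum_le_sum fun i hi => exp_le_exp.2 (mul_le_mul_of_nonneg_left (mem_filter.1 hi).2 hk)
    _ = #(s.filter fun i : ι => f i ≤ c) * exp (k * c) := by rw [sum_const, nsmul_eq_mul]
    _ ≤ #s * exp (k * c) := by gcongr; exact filter_subset _ s

lemma exp_mul_sup'_le_sum_exp (s : Finset ι) (hs : s.Nonempty) (f : ι → ℝ) (k : ℝ) :
    exp (k * s.sup' hs f) ≤ ∑ i ∈ s, exp (k * f i) := by
  obtain ⟨i, hi, hmax⟩ := exists_mem_eq_sup' hs f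
  rw [hmax]
  exact single_le_sum (f := fun j => exp (k * f j)) (fun j _ => (exp_pos _).le) hi

lemma gibbs_mass_sublevel_le {k : ℝ} (hk : 0 ≤ k) (s : Finset ι) (hs : s.Nonempty)
    (f : ι → ℝ) (c : ℝ) :
    (∑ i ∈ s.filter (fun i => f i ≤ s.sup' hs f - c), exp (k * f i)) /
        ∑ i ∈ s, exp (k * f i) ≤ #s * exp (-(k * c)) := by
  have hZ : 0 < ∑ i ∈ s, exp (k * f i) := sum_pos (fun _ _ => exp_pos _) hs
  rw [div_le_iff₀ hZ]
  calc ∑ i ∈ s.filter (fun i => f i ≤ s.sup' hs f - c), exp (k * f i)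
      ≤ #s * exp (k * (s.sup' hs f - c)) := sum_exp_filter_le_card_mul_exp hk s f _
    _ = #s * exp (-(k * c)) * exp (k * s.sup' hs f) := by
        rw [mul_sub, sub_eq_neg_add, exp_add]; ring
    _ ≤ #s * exp (-(k * c)) * ∑ i ∈ s, exp (k * f i) := by
        gcongr; exact exp_mul_sup'_le_sum_exp s hs f k

end

open scoped Classical

theorem stmt_17_general {R : Type*} [Fintype R] [Nonempty R]
    (u : R → ℝ) (Δu ε t : ℝ) (hΔu : 0 < Δu) (hε : 0 < ε) :
    (∑ r ∈ Finset.univ.filter (fun r : R =>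
        u r ≤ (Finset.univ.sup' Finset.univ_nonempty u) -
          (2 * Δu / ε) * (Real.log (Fintype.card R) + t)),
      Real.exp (ε * u r / (2 * Δu))) /
      (∑ r : R, Real.exp (ε * u r / (2 * Δu))) ≤ Real.exp (-t) := by
  have hk : 0 < ε / (2 * Δu) := by positivity
  have hN : (0 : ℝ) < Fintype.card R := by exact_mod_cast Fintype.card_pos
  simp only [mul_div_right_comm ε]
  open Finset Real in
  calc _ ≤ #(univ : Finset R) *
        exp (-(ε / (2 * Δu) * ((2 * Δu / ε) * (log (Fintype.card R) + t)))) :=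
        gibbs_mass_sublevel_le hk.le univ univ_nonempty u _
    _ = exp (-t) := by
        rw [← mul_assoc, div_mul_div_cancel₀ (by positivity), div_self (by positivity), one_mul,
          neg_add, exp_add, exp_neg, exp_log hN, card_univ]
        field_simp

/-- Utility of the exponential mechanism: for a finite range R and score u with
sensitivity Δu, the mechanism that outputs r with probability proportional to
exp(ε u(r)/(2Δu)) returns a score below max u - (2Δu/ε)(log|R| + t) with
probability at most e^{-t}. -/
theorem stmt_17 {R : Type*} [Fintype R] [Nonempty R]
    (u : R → ℝ) (Δu ε t : ℝ) (hΔu : 0 < Δu) (hε : 0 < ε) (ht : 0 < t) :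
    (∑ r ∈ Finset.univ.filter (fun r : R =>
        u r ≤ (Finset.univ.sup' Finset.univ_nonempty u) -
          (2 * Δu / ε) * (Real.log (Fintype.card R) + t)),
      Real.exp (ε * u r / (2 * Δu))) /
      (∑ r : R, Real.exp (ε * u r / (2 * Δu))) ≤ Real.exp (-t) :=
  stmt_17_general u Δu ε t hΔu hε
end

section
/- Let (x_i, y_i), i = 1,…,n, be i.i.d. from D, let θ ∈ (1,2), ι > 0, ζ > 0, let ψ be non-decreasing with ψ(t) ≥ -log(1 - t + |t|^θ/θ), and suppose E‖x‖₂ ≤ τ. Then for any fixed w and η ∈ (0,1), with probability at least 1 - η: -(1/(nι)) Σ_{i=1}^n ψ(ι|y_i - ⟨x_i, w⟩| - ιζ‖x_i‖₂) ≤ -L(w) + ζτ + (2ι)^{θ-1}/θ · E|y - ⟨x, w⟩|^θ + (2ι)^{θ-1}ζ^θ/θ · E‖x‖₂^θ + (1/(nι)) log(1/η). -/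
/-!
Chernoff's method applied to the i.i.d. summands `-ψ(ι V)`, where `V = |y - ⟪x, w⟫| - ζ‖x‖`.
The condition on `ψ` gives `exp (-ψ t) ≤ 1 - t + |t|^θ/θ`, so one summand has moment
generating function at most `1 + ι (-E V + ι^(θ-1) E|V|^θ / θ) ≤ exp (ι (…))`. Here
`-E V ≤ -L(w) + ζτ`, and `|a - ζb|^θ ≤ 2^(θ-1) (a^θ + ζ^θ b^θ)` turns `ι^(θ-1) E|V|^θ` into the
two `(2ι)^(θ-1)` moment terms. Independence multiplies the `n` moment generating functions, and
Markov's inequality at level `exp (nι · bound + log (1/η))` leaves failure probability `η`.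
-/

open MeasureTheory ProbabilityTheory Real
open scoped RealInnerProductSpace ENNReal

lemma one_sub_add_abs_rpow_div_pos {θ : ℝ} (hθ : 1 ≤ θ) (s : ℝ) :
    0 < 1 - s + |s| ^ θ / θ := by
  have hθ0 : 0 < θ := by linarith
  rcases le_or_gt s 0 with hs | hs
  · have : 0 ≤ |s| ^ θ / θ := by positivity
    linarith
  · have bernoulli : 1 + θ * (s - 1) ≤ s ^ θ := by
      simpa using one_add_mul_self_le_rpow_one_add (s := s - 1) (by linarith) hθ
    have key : 1 / θ + s - 1 ≤ s ^ θ / θ :=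
      calc 1 / θ + s - 1 = (1 + θ * (s - 1)) / θ := by field_simp; ring
        _ ≤ s ^ θ / θ := by gcongr
    rw [abs_of_pos hs]
    linarith [one_div_pos.2 hθ0]

lemma exp_neg_le_of_neg_log_le {θ : ℝ} (hθ : 1 ≤ θ) {ψ : ℝ → ℝ}
    (hψ : ∀ t, -log (1 - t + |t| ^ θ / θ) ≤ ψ t) (t : ℝ) :
    exp (-ψ t) ≤ 1 - t + |t| ^ θ / θ := by
  calc exp (-ψ t) ≤ exp (log (1 - t + |t| ^ θ / θ)) := exp_le_exp.2 (by linarith [hψ t])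
    _ = 1 - t + |t| ^ θ / θ := exp_log (one_sub_add_abs_rpow_div_pos hθ t)

lemma add_rpow_le_two_rpow_mul {p a b : ℝ} (hp : 1 ≤ p) (ha : 0 ≤ a) (hb : 0 ≤ b) :
    (a + b) ^ p ≤ 2 ^ (p - 1) * (a ^ p + b ^ p) := by
  lift a to NNReal using ha
  lift b to NNReal using hb
  exact_mod_cast NNReal.rpow_add_le_mul_rpow_add_rpow a b hp

lemma abs_sub_mul_rpow_le {p c a b : ℝ} (hp : 1 ≤ p) (hc : 0 ≤ c) (ha : 0 ≤ a) (hb : 0 ≤ b) :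
    |a - c * b| ^ p ≤ 2 ^ (p - 1) * (a ^ p + c ^ p * b ^ p) := by
  have hcb : 0 ≤ c * b := mul_nonneg hc hb
  calc |a - c * b| ^ p ≤ (a + c * b) ^ p :=
        rpow_le_rpow (abs_nonneg _) (abs_le.2 ⟨by linarith, by linarith⟩) (by linarith)
    _ ≤ 2 ^ (p - 1) * (a ^ p + (c * b) ^ p) := add_rpow_le_two_rpow_mul hp ha hcb
    _ = 2 ^ (p - 1) * (a ^ p + c ^ p * b ^ p) := by rw [mul_rpow hc hb]

section Moments

variable {Ω : Type*} [MeasurableSpace Ω] {μ : Measure Ω} {p c : ℝ} {f g : Ω → ℝ}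

lemma integrable_abs_sub_mul_rpow (hp : 1 ≤ p) (hc : 0 ≤ c) (hf : Measurable f)
    (hg : Measurable g) (hf0 : ∀ x, 0 ≤ f x) (hg0 : ∀ x, 0 ≤ g x)
    (hfp : Integrable (fun x => f x ^ p) μ) (hgp : Integrable (fun x => g x ^ p) μ) :
    Integrable (fun x => |f x - c * g x| ^ p) μ := by
  refine ((hfp.add (hgp.const_mul (c ^ p))).const_mul (2 ^ (p - 1))).mono'
    ((hf.sub (hg.const_mul c)).abs.pow_const p).aestronglyMeasurable (ae_of_all _ fun x => ?_)
  rw [norm_of_nonneg (by positivity)]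
  exact abs_sub_mul_rpow_le hp hc (hf0 x) (hg0 x)

lemma integral_abs_sub_mul_rpow_le (hp : 1 ≤ p) (hc : 0 ≤ c) (hf : Measurable f)
    (hg : Measurable g) (hf0 : ∀ x, 0 ≤ f x) (hg0 : ∀ x, 0 ≤ g x)
    (hfp : Integrable (fun x => f x ^ p) μ) (hgp : Integrable (fun x => g x ^ p) μ) :
    ∫ x, |f x - c * g x| ^ p ∂μ ≤ 2 ^ (p - 1) * (∫ x, f x ^ p ∂μ + c ^ p * ∫ x, g x ^ p ∂μ) := by
  rw [← integral_const_mul, ← integral_add hfp (hgp.const_mul _), ← integral_const_mul]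
  exact integral_mono (integrable_abs_sub_mul_rpow hp hc hf hg hf0 hg0 hfp hgp)
    ((hfp.add (hgp.const_mul _)).const_mul _) fun x => abs_sub_mul_rpow_le hp hc (hf0 x) (hg0 x)

end Moments

section Chernoff

variable {Ω : Type*} [MeasurableSpace Ω] {μ : Measure Ω} [IsProbabilityMeasure μ]

lemma lintegral_exp_neg_comp_mul_le {θ ι : ℝ} (hθ : 1 ≤ θ) (hι : 0 < ι) {ψ : ℝ → ℝ}
    (hψ : ∀ t, -log (1 - t + |t| ^ θ / θ) ≤ ψ t) {V : Ω → ℝ} (hV : Integrable V μ)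
    (hVθ : Integrable (fun x => |V x| ^ θ) μ) :
    ∫⁻ x, ENNReal.ofReal (exp (-ψ (ι * V x))) ∂μ ≤
      ENNReal.ofReal (exp (ι * (-∫ x, V x ∂μ + ι ^ (θ - 1) / θ * ∫ x, |V x| ^ θ ∂μ))) := by
  set c := ι * (-∫ x, V x ∂μ + ι ^ (θ - 1) / θ * ∫ x, |V x| ^ θ ∂μ)
  set g : Ω → ℝ := fun x => 1 + ι * (-V x + ι ^ (θ - 1) / θ * |V x| ^ θ)
  have hpt : ∀ x, exp (-ψ (ι * V x)) ≤ g x := fun x => by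
    convert exp_neg_le_of_neg_log_le hθ hψ (ι * V x) using 1
    simp only [g]
    rw [abs_mul, mul_rpow (abs_nonneg _) (abs_nonneg _), abs_of_pos hι, rpow_sub_one hι.ne']
    field_simp
    ring
  have hnegV : Integrable (fun x => -V x) μ := hV.neg
  have hdev : Integrable (fun x => ι * (-V x + ι ^ (θ - 1) / θ * |V x| ^ θ)) μ :=
    (hnegV.add (hVθ.const_mul _)).const_mul ι
  have hg : Integrable g μ := (integrable_const 1).add hdev
  have hgint : ∫ x, g x ∂μ = 1 + c := by
    rw [integral_add (integrable_const 1) hdev, integral_const_mul,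
      integral_add hnegV (hVθ.const_mul _), integral_neg, integral_const_mul]
    simp [c]
  calc ∫⁻ x, ENNReal.ofReal (exp (-ψ (ι * V x))) ∂μ ≤ ∫⁻ x, ENNReal.ofReal (g x) ∂μ :=
        lintegral_mono fun x => ENNReal.ofReal_le_ofReal (hpt x)
    _ = ENNReal.ofReal (1 + c) := by
        rw [← hgint, ofReal_integral_eq_lintegral_ofReal hg
          (ae_of_all _ fun x => (exp_pos _).le.trans (hpt x))]
    _ ≤ ENNReal.ofReal (exp c) := ENNReal.ofReal_le_ofReal (by linarith [add_one_le_exp c])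

lemma lintegral_exp_neg_comp_mul_sub_le {θ ι c : ℝ} (hθ : 1 ≤ θ) (hι : 0 < ι) (hc : 0 ≤ c)
    {ψ : ℝ → ℝ} (hψ : ∀ t, -log (1 - t + |t| ^ θ / θ) ≤ ψ t) {f g : Ω → ℝ} (hf : Measurable f)
    (hg : Measurable g) (hf0 : ∀ x, 0 ≤ f x) (hg0 : ∀ x, 0 ≤ g x) (hfi : Integrable f μ)
    (hgi : Integrable g μ) (hfp : Integrable (fun x => f x ^ θ) μ)
    (hgp : Integrable (fun x => g x ^ θ) μ) :
    ∫⁻ x, ENNReal.ofReal (exp (-ψ (ι * (f x - c * g x)))) ∂μ ≤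
      ENNReal.ofReal (exp (ι * (-∫ x, f x ∂μ + c * ∫ x, g x ∂μ +
        (2 * ι) ^ (θ - 1) / θ * ∫ x, f x ^ θ ∂μ +
        (2 * ι) ^ (θ - 1) * c ^ θ / θ * ∫ x, g x ^ θ ∂μ))) := by
  have hmean : -∫ x, f x - c * g x ∂μ = -∫ x, f x ∂μ + c * ∫ x, g x ∂μ := by
    rw [integral_sub hfi (hgi.const_mul c), integral_const_mul]
    ring
  have hmoment : ι ^ (θ - 1) / θ * ∫ x, |f x - c * g x| ^ θ ∂μ ≤
      (2 * ι) ^ (θ - 1) / θ * ∫ x, f x ^ θ ∂μ +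
        (2 * ι) ^ (θ - 1) * c ^ θ / θ * ∫ x, g x ^ θ ∂μ := by
    rw [mul_rpow zero_le_two hι.le]
    calc ι ^ (θ - 1) / θ * ∫ x, |f x - c * g x| ^ θ ∂μ
        ≤ ι ^ (θ - 1) / θ * (2 ^ (θ - 1) * (∫ x, f x ^ θ ∂μ + c ^ θ * ∫ x, g x ^ θ ∂μ)) := by
          gcongr
          exact integral_abs_sub_mul_rpow_le hθ hc hf hg hf0 hg0 hfp hgp
      _ = _ := by ring
  have hdev : Integrable (fun x => f x - c * g x) μ := hfi.sub (hgi.const_mul c)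
  refine (lintegral_exp_neg_comp_mul_le hθ hι hψ hdev
    (integrable_abs_sub_mul_rpow hθ hc hf hg hf0 hg0 hfp hgp)).trans ?_
  exact ENNReal.ofReal_le_ofReal (exp_le_exp.2 (mul_le_mul_of_nonneg_left (by linarith) hι.le))

lemma lintegral_pi_prod_eq_pow {ι : Type*} [Fintype ι] {f : Ω → ℝ≥0∞} (hf : Measurable f) :
    ∫⁻ ω, ∏ i, f (ω i) ∂(Measure.pi fun _ : ι => μ) = (∫⁻ x, f x ∂μ) ^ Fintype.card ι := by
  rw [lintegral_prod_eq_prod_lintegral_of_indepFun _ _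
    (iIndepFun_pi fun _ => hf.aemeasurable) fun i => hf.comp (measurable_pi_apply i)]
  simp_rw [(measurePreserving_eval (fun _ : ι => μ) _).lintegral_comp hf]
  simp

lemma measure_pi_le_sum_le {ι : Type*} [Fintype ι] {Z : Ω → ℝ} (hZ : Measurable Z) {c : ℝ}
    (hc : ∫⁻ x, ENNReal.ofReal (exp (Z x)) ∂μ ≤ ENNReal.ofReal (exp c)) (s : ℝ) :
    Measure.pi (fun _ : ι => μ) {ω | s ≤ ∑ i, Z (ω i)} ≤
      ENNReal.ofReal (exp (Fintype.card ι * c - s)) := by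
  have hF : Measurable fun x => ENNReal.ofReal (exp (Z x)) := by fun_prop
  have hprod : Measurable fun ω : ι → Ω => ∏ i, ENNReal.ofReal (exp (Z (ω i))) :=
    Finset.measurable_prod _ fun i _ => hF.comp (measurable_pi_apply i)
  have hset : {ω : ι → Ω | s ≤ ∑ i, Z (ω i)} =
      {ω | ENNReal.ofReal (exp s) ≤ ∏ i, ENNReal.ofReal (exp (Z (ω i)))} := by
    ext ω
    change s ≤ ∑ i, Z (ω i) ↔ ENNReal.ofReal (exp s) ≤ ∏ i, ENNReal.ofReal (exp (Z (ω i)))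
    rw [← ENNReal.ofReal_prod_of_nonneg
      fun i _ => (exp_pos _).le, ← exp_sum, ENNReal.ofReal_le_ofReal_iff (exp_pos _).le, exp_le_exp]
  calc Measure.pi (fun _ : ι => μ) {ω | s ≤ ∑ i, Z (ω i)}
      ≤ (∫⁻ ω, ∏ i, ENNReal.ofReal (exp (Z (ω i))) ∂(Measure.pi fun _ : ι => μ)) /
          ENNReal.ofReal (exp s) := by
        rw [hset]
        exact meas_ge_le_lintegral_div hprod.aemeasurable (by simp [exp_pos]) ENNReal.ofReal_ne_top
    _ ≤ ENNReal.ofReal (exp c) ^ Fintype.card ι / ENNReal.ofReal (exp s) := by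
        rw [lintegral_pi_prod_eq_pow hF]
        gcongr
    _ = ENNReal.ofReal (exp (Fintype.card ι * c - s)) := by
        rw [← ENNReal.ofReal_pow (exp_pos _).le, ← ENNReal.ofReal_div_of_pos (exp_pos _),
          ← exp_nat_mul, exp_sub]

lemma one_sub_le_measure_pi_sum_lt {ι : Type*} [Fintype ι] {Z : Ω → ℝ} (hZ : Measurable Z)
    {c : ℝ} (hc : ∫⁻ x, ENNReal.ofReal (exp (Z x)) ∂μ ≤ ENNReal.ofReal (exp c)) {η : ℝ}
    (hη : 0 < η) :
    ENNReal.ofReal (1 - η) ≤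
      Measure.pi (fun _ : ι => μ) {ω | ∑ i, Z (ω i) < Fintype.card ι * c + log (1 / η)} := by
  set s := Fintype.card ι * c + log (1 / η)
  have hmeas : MeasurableSet {ω : ι → Ω | s ≤ ∑ i, Z (ω i)} :=
    measurableSet_le measurable_const
      (Finset.measurable_sum _ fun i _ => hZ.comp (measurable_pi_apply i))
  have htail := measure_pi_le_sum_le (ι := ι) hZ hc s
  rw [show Fintype.card ι * c - s = log η by simp [s, log_inv], exp_log hη] at htail
  calc ENNReal.ofReal (1 - η) = 1 - ENNReal.ofReal η := by
        rw [ENNReal.ofReal_sub _ hη.le, ENNReal.ofReal_one]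
    _ ≤ 1 - Measure.pi (fun _ : ι => μ) {ω | s ≤ ∑ i, Z (ω i)} := tsub_le_tsub_left htail 1
    _ = Measure.pi (fun _ : ι => μ) {ω | ∑ i, Z (ω i) < s} := by
        rw [← prob_compl_eq_one_sub hmeas]
        congr 1
        ext ω
        exact not_le (a := s)

end Chernoff

theorem stmt_19_general {d : ℕ} (n : ℕ) (hn : 0 < n) {Ω : Type*} [MeasurableSpace Ω]
    (μ : Measure Ω) [IsProbabilityMeasure μ]
    (X : Ω → EuclideanSpace ℝ (Fin d)) (Y : Ω → ℝ)
    (hXm : Measurable X) (hYm : Measurable Y)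
    (θ ι ζ τ : ℝ) (hθ1 : 1 < θ) (hι : 0 < ι) (hζ : 0 < ζ)
    (ψ : ℝ → ℝ) (hmono : Monotone ψ)
    (hψ : ∀ t : ℝ, -Real.log (1 - t + |t| ^ θ / θ) ≤ ψ t)
    (hXnormint : Integrable (fun ω => ‖X ω‖) μ)
    (hτ : ∫ ω, ‖X ω‖ ∂μ ≤ τ)
    (w : EuclideanSpace ℝ (Fin d))
    (hL : Integrable (fun ω => |Y ω - ⟪X ω, w⟫|) μ)
    (hθint : Integrable (fun ω => |Y ω - ⟪X ω, w⟫| ^ θ) μ)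
    (hXθint : Integrable (fun ω => ‖X ω‖ ^ θ) μ)
    (η : ℝ) (hη0 : 0 < η) :
    ENNReal.ofReal (1 - η) ≤
      (Measure.pi fun _ : Fin n => μ)
        {ω | -((1 / (n * ι)) *
            ∑ i, ψ (ι * |Y (ω i) - ⟪X (ω i), w⟫| - ι * ζ * ‖X (ω i)‖)) ≤
          -(∫ ω', |Y ω' - ⟪X ω', w⟫| ∂μ) + ζ * τ +
          (2 * ι) ^ (θ - 1) / θ * (∫ ω', |Y ω' - ⟪X ω', w⟫| ^ θ ∂μ) +
          (2 * ι) ^ (θ - 1) * ζ ^ θ / θ * (∫ ω', ‖X ω'‖ ^ θ ∂μ) +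
          (1 / (n * ι)) * Real.log (1 / η)} := by
  set Δ : Ω → ℝ := fun ω => |Y ω - ⟪X ω, w⟫|
  set B := -(∫ ω, Δ ω ∂μ) + ζ * τ + (2 * ι) ^ (θ - 1) / θ * (∫ ω, Δ ω ^ θ ∂μ) +
    (2 * ι) ^ (θ - 1) * ζ ^ θ / θ * (∫ ω, ‖X ω‖ ^ θ ∂μ)
  have hΔm : Measurable Δ := (hYm.sub (hXm.inner measurable_const)).abs
  have hmgf : ∫⁻ ω, ENNReal.ofReal (exp (-ψ (ι * (Δ ω - ζ * ‖X ω‖)))) ∂μ ≤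
      ENNReal.ofReal (exp (ι * B)) :=
    (lintegral_exp_neg_comp_mul_sub_le hθ1.le hι hζ.le hψ hΔm hXm.norm (fun _ => abs_nonneg _)
      (fun _ => norm_nonneg _) hL hXnormint hθint hXθint).trans <| by simp only [B]; gcongr
  refine (one_sub_le_measure_pi_sum_lt (ι := Fin n) (Z := fun ω => -ψ (ι * (Δ ω - ζ * ‖X ω‖)))
    (hmono.measurable.comp ((hΔm.sub (hXm.norm.const_mul ζ)).const_mul ι)).neg hmgf hη0).trans <|
    measure_mono fun ω hω => ?_
  have hnι : 0 < (n : ℝ) * ι := by positivity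
  simp only [Set.mem_ofPred_eq, Fintype.card_fin, Finset.sum_neg_distrib] at hω ⊢
  calc -(1 / (n * ι) * ∑ i, ψ (ι * |Y (ω i) - ⟪X (ω i), w⟫| - ι * ζ * ‖X (ω i)‖))
      = 1 / (n * ι) * -∑ i, ψ (ι * (Δ (ω i) - ζ * ‖X (ω i)‖)) := by
        simp only [Δ, mul_sub, mul_assoc]; ring
    _ ≤ 1 / (n * ι) * (n * (ι * B) + log (1 / η)) := by gcongr
    _ = B + 1 / (n * ι) * log (1 / η) := by field_simp

/-- Concentration bound for the shifted truncated loss (θ-th moment case),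
used in the proof of Lemma 11 of the paper. -/
theorem stmt_19 {d : ℕ} (n : ℕ) (hn : 0 < n) {Ω : Type*} [MeasurableSpace Ω]
    (μ : Measure Ω) [IsProbabilityMeasure μ]
    (X : Ω → EuclideanSpace ℝ (Fin d)) (Y : Ω → ℝ)
    (hXm : Measurable X) (hYm : Measurable Y)
    (θ ι ζ τ : ℝ) (hθ1 : 1 < θ) (hθ2 : θ < 2) (hι : 0 < ι) (hζ : 0 < ζ)
    (ψ : ℝ → ℝ) (hmono : Monotone ψ)
    (hψ : ∀ t : ℝ, -Real.log (1 - t + |t| ^ θ / θ) ≤ ψ t)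
    (hXnormint : Integrable (fun ω => ‖X ω‖) μ)
    (hτ : ∫ ω, ‖X ω‖ ∂μ ≤ τ)
    (w : EuclideanSpace ℝ (Fin d))
    (hL : Integrable (fun ω => |Y ω - ⟪X ω, w⟫|) μ)
    (hθint : Integrable (fun ω => |Y ω - ⟪X ω, w⟫| ^ θ) μ)
    (hXθint : Integrable (fun ω => ‖X ω‖ ^ θ) μ)
    (η : ℝ) (hη0 : 0 < η) (hη1 : η < 1) :
    ENNReal.ofReal (1 - η) ≤
      (Measure.pi fun _ : Fin n => μ)
        {ω | -((1 / (n * ι)) *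
            ∑ i, ψ (ι * |Y (ω i) - ⟪X (ω i), w⟫| - ι * ζ * ‖X (ω i)‖)) ≤
          -(∫ ω', |Y ω' - ⟪X ω', w⟫| ∂μ) + ζ * τ +
          (2 * ι) ^ (θ - 1) / θ * (∫ ω', |Y ω' - ⟪X ω', w⟫| ^ θ ∂μ) +
          (2 * ι) ^ (θ - 1) * ζ ^ θ / θ * (∫ ω', ‖X ω'‖ ^ θ ∂μ) +
          (1 / (n * ι)) * Real.log (1 / η)} :=
  stmt_19_general n hn μ X Y hXm hYm θ ι ζ τ hθ1 hι hζ ψ hmono hψ hXnormint hτ w hL hθint hXθint η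
    hη0
end
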